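/- arXiv:2511.21447 — 3 statements merged into one kernel-verified Lean document; each statement's English description precedes it below -/
import Mathlib

section
/- Abstract version of Lemma 2.4: let A, B, F ∈ ℝ denote ‖(u,v)‖^p, ∫_Ω h|u|^r|v|^s, and λ∫_Ω f|u|^q + μ∫_Ω g|v|^q respectively, with A > 0. Suppose (p-q)A = (r+s-q)B and (r+s-p)A = (r+s-q)F, together with the estimates B ≤ C₁ A^{(r+s)/p} and F ≤ C₂ A^{q/p} for constants C₁, C₂ > 0 (Sobolev embedding bounds). Then A ≥ ((p-q)/((r+s-q)C₁))^{p/(r+s-p)} and A ≤ ((r+s-q)C₂/(r+s-p))^{p/(p-q)}. Consequently, if C₂ is small enough (depending on C₁, p, q, r, s), no such A > 0 exists. -/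
/-!
The two Nehari identities express `B` and `F` as fixed multiples of `A`. Inserted into the
Sobolev bounds they give `A ^ ((r+s-p)/p) ≥ (p-q)/((r+s-q) C₁)` and
`A ^ ((p-q)/p) ≤ (r+s-q) C₂/(r+s-p)`; both exponents are positive, so these invert to the two
bounds on `A`. The lower bound does not involve `C₂`, while the upper bound tends to `0` with
`C₂`, so for small `C₂` they are incompatible.
-/

open Real

lemma div_le_rpow_sub_one_of_mul_le_mul_rpow {a c A θ : ℝ} (hA : 0 < A) (hc : 0 < c)
    (h : a * A ≤ c * A ^ θ) : a / c ≤ A ^ (θ - 1) := by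
  rwa [div_le_iff₀ hc, rpow_sub_one hA.ne', div_mul_eq_mul_div, le_div_iff₀ hA,
    mul_comm (A ^ θ)]

lemma rpow_one_sub_le_div_of_mul_le_mul_rpow {b c A θ : ℝ} (hA : 0 < A) (hb : 0 < b)
    (h : b * A ≤ c * A ^ θ) : A ^ (1 - θ) ≤ c / b := by
  rwa [le_div_iff₀ hb, rpow_sub hA, rpow_one, div_mul_eq_mul_div,
    div_le_iff₀ (rpow_pos_of_pos hA θ), mul_comm A]

section Nehari

variable {p q t A B F C : ℝ}

lemma nehari_lower_bound (hp : 0 < p) (hqp : q < p) (hpt : p < t) (hA : 0 < A) (hC : 0 < C)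
    (hAB : (p - q) * A = (t - q) * B) (hB : B ≤ C * A ^ (t / p)) :
    ((p - q) / ((t - q) * C)) ^ (p / (t - p)) ≤ A := by
  have htq : 0 < t - q := by linarith
  have hAB' : (p - q) * A ≤ ((t - q) * C) * A ^ (t / p) := by
    rw [hAB, mul_assoc]; exact mul_le_mul_of_nonneg_left hB htq.le
  have hexp : t / p - 1 = (t - p) / p := by field_simp
  rw [← inv_div (t - p) p, rpow_inv_le_iff_of_pos (div_nonneg (by linarith) (by positivity)) hA.le
    (div_pos (by linarith) hp), ← hexp]
  exact div_le_rpow_sub_one_of_mul_le_mul_rpow hA (by positivity) hAB'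

lemma nehari_rpow_upper_bound (hp : 0 < p) (hqp : q < p) (hpt : p < t) (hA : 0 < A)
    (hAF : (t - p) * A = (t - q) * F) (hF : F ≤ C * A ^ (q / p)) :
    A ^ ((p - q) / p) ≤ (t - q) * C / (t - p) := by
  have hAF' : (t - p) * A ≤ ((t - q) * C) * A ^ (q / p) := by
    rw [hAF, mul_assoc]; exact mul_le_mul_of_nonneg_left hF (by linarith)
  have hexp : 1 - q / p = (p - q) / p := by field_simp
  rw [← hexp]
  exact rpow_one_sub_le_div_of_mul_le_mul_rpow hA (by linarith) hAF'

lemma nehari_upper_bound (hp : 0 < p) (hqp : q < p) (hpt : p < t) (hA : 0 < A) (hC : 0 < C)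
    (hAF : (t - p) * A = (t - q) * F) (hF : F ≤ C * A ^ (q / p)) :
    A ≤ ((t - q) * C / (t - p)) ^ (p / (p - q)) := by
  rw [← inv_div (p - q) p, le_rpow_inv_iff_of_pos hA.le
    (div_nonneg (mul_nonneg (by linarith) hC.le) (by linarith)) (div_pos (by linarith) hp)]
  exact nehari_rpow_upper_bound hp hqp hpt hA hAF hF

end Nehari

/-- abstract version of Lemma 2.4.  With `A = ‖(u,v)‖^p`,
`B = ∫_Ω h|u|^r|v|^s` and `F = λ∫_Ω f|u|^q + μ∫_Ω g|v|^q`, the identities on the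
degenerate Nehari set together with the Sobolev-embedding bounds force both a
lower and an upper bound on `A`; consequently, if `C₂` is small enough
(depending on `C₁, p, q, r, s`), no such `A > 0` exists. -/
theorem stmt_6 (p q r s A B F C₁ C₂ : ℝ)
    (hq : 1 < q) (hqp : q < p) (hprs : p < r + s)
    (hA : 0 < A) (hC₁ : 0 < C₁) (hC₂ : 0 < C₂)
    (h1 : (p - q) * A = (r + s - q) * B)
    (h2 : (r + s - p) * A = (r + s - q) * F)
    (hB : B ≤ C₁ * A ^ ((r + s) / p))
    (hF : F ≤ C₂ * A ^ (q / p)) :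
    (((p - q) / ((r + s - q) * C₁)) ^ (p / (r + s - p)) ≤ A ∧
      A ≤ (((r + s - q) * C₂) / (r + s - p)) ^ (p / (p - q))) ∧
    ∃ ε > 0, ∀ C₂' A' B' F', 0 < C₂' → C₂' < ε → 0 < A' →
      (p - q) * A' = (r + s - q) * B' →
      (r + s - p) * A' = (r + s - q) * F' →
      B' ≤ C₁ * A' ^ ((r + s) / p) →
      F' ≤ C₂' * A' ^ (q / p) → False := by
  have hp : 0 < p := by linarith
  have hrsq : 0 < r + s - q := by linarith
  have hrsp : 0 < r + s - p := by linarith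
  set L := ((p - q) / ((r + s - q) * C₁)) ^ (p / (r + s - p))
  have hL : 0 ≤ L := rpow_nonneg (div_nonneg (by linarith) (by positivity)) _
  refine ⟨⟨nehari_lower_bound hp hqp hprs hA hC₁ h1 hB,
    nehari_upper_bound hp hqp hprs hA hC₂ h2 hF⟩,
    (r + s - p) / (r + s - q) * L ^ ((p - q) / p), by positivity, ?_⟩
  intro C₂' A' B' F' _ hC₂' hA' h1' h2' hB' hF'
  have hlower : L ^ ((p - q) / p) ≤ A' ^ ((p - q) / p) :=
    rpow_le_rpow hL (nehari_lower_bound hp hqp hprs hA' hC₁ h1' hB')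
      (div_nonneg (by linarith) hp.le)
  have hupper := nehari_rpow_upper_bound hp hqp hprs hA' h2' hF'
  have hsmall : (r + s - q) * C₂' / (r + s - p) < L ^ ((p - q) / p) := by
    rwa [div_lt_iff₀ hrsp, ← lt_div_iff₀' hrsq, mul_div_assoc, mul_comm]
  linarith
end

section
/- With φ and m as above (a, c > 0, 1 < q < p < r+s), if 0 < b < m(t_max) = a^{(r+s-q)/(r+s-p)} c^{-(p-q)/(r+s-p)} ((p-q)/(r+s-q))^{(p-q)/(r+s-p)} ((r+s-p)/(r+s-q)), then the equation m(t) = b has exactly two positive solutions t₁ < t_max < t₂; φ has a local minimum at t₁ and a local maximum at t₂. -/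
/-! The derivative `m'(t) = t^{p-q-1} ((p-q) a - (r+s-q) c t^{r+s-p})` has the sign of
`t_max - t`, so `m` increases strictly from `m(0) = 0` to `m(t_max)` and then decreases
strictly to `-∞`. The intermediate value theorem gives one solution of `m(t) = b` on each
side of `t_max`, and strict monotonicity makes them the only ones. Since
`φ'(t) = t^{q-1} (m(t) - b)`, the derivative of `φ` changes sign
from `-` to `+` at `t₁` and from `+` to `-` at `t₂`. -/

open Real Set Filter

theorem isLocalMin_of_hasDerivAt_Ioo {f f' : ℝ → ℝ} {a b c : ℝ} (hab : a < b) (hbc : b < c)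
    (hf : ∀ x ∈ Ioo a c, HasDerivAt f (f' x) x)
    (h₀ : ∀ x ∈ Ioo a b, f' x ≤ 0) (h₁ : ∀ x ∈ Ioo b c, 0 ≤ f' x) :
    IsLocalMin f b :=
  isLocalMin_of_deriv_Ioo hab hbc (hf b ⟨hab, hbc⟩).continuousAt
    (fun x hx => (hf x ⟨hx.1, hx.2.trans hbc⟩).differentiableAt.differentiableWithinAt)
    (fun x hx => (hf x ⟨hab.trans hx.1, hx.2⟩).differentiableAt.differentiableWithinAt)
    (fun x hx => (hf x ⟨hx.1, hx.2.trans hbc⟩).deriv ▸ h₀ x hx)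
    (fun x hx => (hf x ⟨hab.trans hx.1, hx.2⟩).deriv ▸ h₁ x hx)

theorem isLocalMax_of_hasDerivAt_Ioo {f f' : ℝ → ℝ} {a b c : ℝ} (hab : a < b) (hbc : b < c)
    (hf : ∀ x ∈ Ioo a c, HasDerivAt f (f' x) x)
    (h₀ : ∀ x ∈ Ioo a b, 0 ≤ f' x) (h₁ : ∀ x ∈ Ioo b c, f' x ≤ 0) :
    IsLocalMax f b :=
  isLocalMax_of_deriv_Ioo hab hbc (hf b ⟨hab, hbc⟩).continuousAt
    (fun x hx => (hf x ⟨hx.1, hx.2.trans hbc⟩).differentiableAt.differentiableWithinAt)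
    (fun x hx => (hf x ⟨hab.trans hx.1, hx.2⟩).differentiableAt.differentiableWithinAt)
    (fun x hx => (hf x ⟨hx.1, hx.2.trans hbc⟩).deriv ▸ h₀ x hx)
    (fun x hx => (hf x ⟨hab.trans hx.1, hx.2⟩).deriv ▸ h₁ x hx)

theorem exists_two_roots_of_strictMonoOn_of_strictAntiOn {f : ℝ → ℝ} {M T b : ℝ}
    (hM : 0 ≤ M) (hMT : M ≤ T) (hf : ContinuousOn f (Icc 0 T))
    (hmono : StrictMonoOn f (Icc 0 M)) (hanti : StrictAntiOn f (Ici M))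
    (h0 : f 0 < b) (hbM : b < f M) (hT : f T < b) :
    ∃ t₁ t₂, 0 < t₁ ∧ t₁ < M ∧ M < t₂ ∧ f t₁ = b ∧ f t₂ = b ∧
      (∀ t, 0 ≤ t → f t = b → t = t₁ ∨ t = t₂) ∧
      (∀ t ∈ Ioo 0 t₁, f t < b) ∧ (∀ t ∈ Ioo t₁ t₂, b < f t) ∧
      (∀ t ∈ Ioi t₂, f t < b) := by
  obtain ⟨t₁, ⟨ht₁, ht₁M⟩, hft₁⟩ :=
    intermediate_value_Ioo hM (hf.mono (Icc_subset_Icc_right hMT)) ⟨h0, hbM⟩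
  obtain ⟨t₂, ⟨hMt₂, -⟩, hft₂⟩ :=
    intermediate_value_Ioo' hMT (hf.mono (Icc_subset_Icc_left hM)) ⟨hT, hbM⟩
  have h₁ : t₁ ∈ Icc 0 M := ⟨ht₁.le, ht₁M.le⟩
  have h₂ : t₂ ∈ Ici M := mem_Ici.2 hMt₂.le
  refine ⟨t₁, t₂, ht₁, ht₁M, hMt₂, hft₁, hft₂, fun t ht hft => ?_, fun t ht => ?_,
    fun t ht => ?_, fun t ht => ?_⟩
  · rcases le_total t M with htM | hMt
    · exact .inl (hmono.injOn ⟨ht, htM⟩ h₁ (hft.trans hft₁.symm))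
    · exact .inr (hanti.injOn hMt h₂ (hft.trans hft₂.symm))
  · exact hft₁ ▸ hmono ⟨ht.1.le, (ht.2.trans ht₁M).le⟩ h₁ ht.2
  · rcases le_total t M with htM | hMt
    · exact hft₁ ▸ hmono h₁ ⟨(ht₁.trans ht.1).le, htM⟩ ht.1
    · exact hft₂ ▸ hanti hMt h₂ ht.2
  · exact hft₂ ▸ hanti h₂ (hMt₂.le.trans (le_of_lt ht)) ht

/-- The paper's `m` is `powDiff a c (p - q) (r + s - q)`, and `t_max` is its `powDiffArgmax`. -/
noncomputable def powDiff (a c u v t : ℝ) : ℝ := a * t ^ u - c * t ^ v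

noncomputable def powDiffArgmax (a c u v : ℝ) : ℝ := (a * u / (c * v)) ^ ((1 : ℝ) / (v - u))

section PowDiff

variable {a c u v t : ℝ}

theorem continuous_powDiff (hu : 0 ≤ u) (hv : 0 ≤ v) : Continuous (powDiff a c u v) :=
  (continuous_const.mul (continuous_rpow_const hu)).sub
    (continuous_const.mul (continuous_rpow_const hv))

theorem powDiff_zero (hu : u ≠ 0) (hv : v ≠ 0) : powDiff a c u v 0 = 0 := by
  simp [powDiff, zero_rpow hu, zero_rpow hv]

theorem powDiff_eq_mul (ht : 0 < t) : powDiff a c u v t = t ^ u * (a - c * t ^ (v - u)) := by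
  rw [powDiff, mul_sub, ← mul_assoc, mul_comm (t ^ u) c, mul_assoc, ← rpow_add ht,
    add_sub_cancel]
  ring

theorem hasDerivAt_powDiff (ht : 0 < t) :
    HasDerivAt (powDiff a c u v) (t ^ (u - 1) * (a * u - c * v * t ^ (v - u))) t := by
  refine (((hasDerivAt_rpow_const (Or.inl ht.ne')).const_mul a).sub
    ((hasDerivAt_rpow_const (Or.inl ht.ne')).const_mul c)).congr_deriv ?_
  rw [show v - 1 = (u - 1) + (v - u) by ring, rpow_add ht]
  ring

theorem powDiffArgmax_pos (ha : 0 < a) (hc : 0 < c) (hu : 0 < u) (huv : u < v) :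
    0 < powDiffArgmax a c u v :=
  rpow_pos_of_pos (by have := hu.trans huv; positivity) _

theorem powDiffArgmax_rpow (ha : 0 < a) (hc : 0 < c) (hu : 0 < u) (huv : u < v) :
    powDiffArgmax a c u v ^ (v - u) = a * u / (c * v) := by
  have := hu.trans huv
  rw [powDiffArgmax, one_div, rpow_inv_rpow (by positivity) (sub_pos.2 huv).ne']

theorem strictMonoOn_powDiff (ha : 0 < a) (hc : 0 < c) (hu : 0 < u) (huv : u < v) :
    StrictMonoOn (powDiff a c u v) (Icc 0 (powDiffArgmax a c u v)) := by
  have hv := hu.trans huv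
  refine strictMonoOn_of_deriv_pos (convex_Icc _ _)
    (continuous_powDiff hu.le hv.le).continuousOn fun t ht => ?_
  rw [interior_Icc] at ht
  have hlt : t ^ (v - u) < a * u / (c * v) :=
    powDiffArgmax_rpow ha hc hu huv ▸ rpow_lt_rpow ht.1.le ht.2 (sub_pos.2 huv)
  rw [lt_div_iff₀ (by positivity)] at hlt
  rw [(hasDerivAt_powDiff ht.1).deriv]
  exact mul_pos (rpow_pos_of_pos ht.1 _) (by linarith)

theorem strictAntiOn_powDiff (ha : 0 < a) (hc : 0 < c) (hu : 0 < u) (huv : u < v) :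
    StrictAntiOn (powDiff a c u v) (Ici (powDiffArgmax a c u v)) := by
  have hv := hu.trans huv
  refine strictAntiOn_of_deriv_neg (convex_Ici _)
    (continuous_powDiff hu.le hv.le).continuousOn fun t ht => ?_
  rw [interior_Ici] at ht
  have ht0 : 0 < t := (powDiffArgmax_pos ha hc hu huv).trans ht
  have hlt : a * u / (c * v) < t ^ (v - u) :=
    powDiffArgmax_rpow ha hc hu huv ▸
      rpow_lt_rpow (powDiffArgmax_pos ha hc hu huv).le ht (sub_pos.2 huv)
  rw [div_lt_iff₀ (by positivity)] at hlt
  rw [(hasDerivAt_powDiff ht0).deriv]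
  exact mul_neg_of_pos_of_neg (rpow_pos_of_pos ht0 _) (by linarith)

theorem powDiff_powDiffArgmax (ha : 0 < a) (hc : 0 < c) (hu : 0 < u) (huv : u < v) :
    powDiff a c u v (powDiffArgmax a c u v)
      = a ^ (v / (v - u)) * c ^ (-u / (v - u)) * (u / v) ^ (u / (v - u)) * ((v - u) / v) := by
  have hv := hu.trans huv
  have hvu : v - u ≠ 0 := (sub_pos.2 huv).ne'
  have hmax : powDiffArgmax a c u v ^ u
      = a ^ (u / (v - u)) * c ^ (-u / (v - u)) * (u / v) ^ (u / (v - u)) := by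
    rw [powDiffArgmax, ← rpow_mul (by positivity), one_div_mul_eq_div,
      show a * u / (c * v) = a * c⁻¹ * (u / v) by field_simp,
      mul_rpow (by positivity) (by positivity), mul_rpow ha.le (by positivity),
      inv_rpow hc.le, ← rpow_neg hc.le, neg_div]
  have ha' : a * a ^ (u / (v - u)) = a ^ (v / (v - u)) := by
    rw [mul_comm, ← rpow_add_one ha.ne']
    congr 1
    field_simp
    ring
  rw [powDiff_eq_mul (powDiffArgmax_pos ha hc hu huv), powDiffArgmax_rpow ha hc hu huv, hmax,
    ← ha']
  field_simp

theorem exists_powDiff_neg (hc : 0 < c) (huv : u < v) (x : ℝ) :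
    ∃ T, x ≤ T ∧ powDiff a c u v T < 0 := by
  have hlarge : ∀ᶠ t in atTop, a < c * t ^ (v - u) :=
    ((tendsto_rpow_atTop (sub_pos.2 huv)).const_mul_atTop hc).eventually_gt_atTop a
  obtain ⟨T, hxT, hT, haT⟩ :=
    ((eventually_ge_atTop x).and ((eventually_gt_atTop 0).and hlarge)).exists
  refine ⟨T, hxT, ?_⟩
  rw [powDiff_eq_mul hT]
  exact mul_neg_of_pos_of_neg (rpow_pos_of_pos hT _) (by linarith)

end PowDiff

theorem hasDerivAt_fibering {a b c p q e t : ℝ} (hp : p ≠ 0) (hq : q ≠ 0) (he : e ≠ 0)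
    (ht : 0 < t) :
    HasDerivAt (fun t : ℝ => (a / p) * t ^ p - (b / q) * t ^ q - (c / e) * t ^ e)
      (t ^ (q - 1) * (powDiff a c (p - q) (e - q) t - b)) t := by
  refine ((((hasDerivAt_rpow_const (Or.inl ht.ne')).const_mul _).sub
    ((hasDerivAt_rpow_const (Or.inl ht.ne')).const_mul _)).sub
    ((hasDerivAt_rpow_const (Or.inl ht.ne')).const_mul _)).congr_deriv ?_
  rw [show p - 1 = (q - 1) + (p - q) by ring, show e - 1 = (q - 1) + (e - q) by ring,
    rpow_add ht, rpow_add ht, powDiff]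
  field_simp
  ring

/-- if `0 < b < m(t_max)`, where
`m(t) = a t^{p-q} - c t^{r+s-q}`, `t_max = (a(p-q)/(c(r+s-q)))^{1/(r+s-p)}` and
`m(t_max) = a^{(r+s-q)/(r+s-p)} c^{-(p-q)/(r+s-p)} ((p-q)/(r+s-q))^{(p-q)/(r+s-p)} ((r+s-p)/(r+s-q))`,
then `m(t) = b` has exactly two positive solutions `t₁ < t_max < t₂`, and the fibering
map `φ(t) = (a/p)t^p - (b/q)t^q - (c/(r+s))t^{r+s}` has a local minimum at `t₁` and a
local maximum at `t₂`. -/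
theorem stmt_9 (a b c p q r s : ℝ)
    (ha : 0 < a) (hc : 0 < c)
    (hq : 1 < q) (hqp : q < p) (hprs : p < r + s)
    (hb : 0 < b)
    (hb2 : b < a ^ ((r + s - q) / (r + s - p)) * c ^ (-(p - q) / (r + s - p))
        * ((p - q) / (r + s - q)) ^ ((p - q) / (r + s - p)) * ((r + s - p) / (r + s - q))) :
    ∃ t₁ t₂ : ℝ, 0 < t₁ ∧
      t₁ < ((a * (p - q)) / (c * (r + s - q))) ^ ((1 : ℝ) / (r + s - p)) ∧
      ((a * (p - q)) / (c * (r + s - q))) ^ ((1 : ℝ) / (r + s - p)) < t₂ ∧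
      a * t₁ ^ (p - q) - c * t₁ ^ (r + s - q) = b ∧
      a * t₂ ^ (p - q) - c * t₂ ^ (r + s - q) = b ∧
      (∀ t : ℝ, 0 < t → a * t ^ (p - q) - c * t ^ (r + s - q) = b → t = t₁ ∨ t = t₂) ∧
      IsLocalMin (fun t : ℝ => (a / p) * t ^ p - (b / q) * t ^ q - (c / (r + s)) * t ^ (r + s)) t₁ ∧
      IsLocalMax (fun t : ℝ => (a / p) * t ^ p - (b / q) * t ^ q - (c / (r + s)) * t ^ (r + s)) t₂ := by
  have hu : 0 < p - q := by linarith
  have huv : p - q < r + s - q := by linarith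
  have hgap : r + s - q - (p - q) = r + s - p := by ring
  have htmax : powDiffArgmax a c (p - q) (r + s - q)
      = ((a * (p - q)) / (c * (r + s - q))) ^ ((1 : ℝ) / (r + s - p)) := by
    rw [powDiffArgmax, hgap]
  have hbmax :
      b < powDiff a c (p - q) (r + s - q) (powDiffArgmax a c (p - q) (r + s - q)) := by
    rwa [powDiff_powDiffArgmax ha hc hu huv, hgap]
  obtain ⟨T, hT, hmT⟩ :=
    exists_powDiff_neg (a := a) hc huv (powDiffArgmax a c (p - q) (r + s - q))
  obtain ⟨t₁, t₂, ht₁, ht₁M, hMt₂, hm₁, hm₂, huniq, hlt₁, hgt, hlt₂⟩ :=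
    exists_two_roots_of_strictMonoOn_of_strictAntiOn (powDiffArgmax_pos ha hc hu huv).le hT
      (continuous_powDiff hu.le (hu.trans huv).le).continuousOn
      (strictMonoOn_powDiff ha hc hu huv) (strictAntiOn_powDiff ha hc hu huv)
      (by rwa [powDiff_zero hu.ne' (hu.trans huv).ne']) hbmax (hmT.trans hb)
  have hφ' : ∀ t, 0 < t → HasDerivAt
      (fun t : ℝ => (a / p) * t ^ p - (b / q) * t ^ q - (c / (r + s)) * t ^ (r + s))
      (t ^ (q - 1) * (powDiff a c (p - q) (r + s - q) t - b)) t :=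
    fun t ht => hasDerivAt_fibering (by linarith) (by linarith) (by linarith) ht
  rw [htmax] at ht₁M hMt₂
  refine ⟨t₁, t₂, ht₁, ht₁M, hMt₂, hm₁, hm₂, fun t ht => huniq t ht.le, ?_, ?_⟩
  · exact isLocalMin_of_hasDerivAt_Ioo ht₁ (ht₁M.trans hMt₂) (fun t ht => hφ' t ht.1)
      (fun t ht => (mul_neg_of_pos_of_neg (rpow_pos_of_pos ht.1 _) (sub_neg.2 (hlt₁ t ht))).le)
      (fun t ht => (mul_pos (rpow_pos_of_pos (ht₁.trans ht.1) _) (sub_pos.2 (hgt t ht))).le)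
  · exact isLocalMax_of_hasDerivAt_Ioo (ht₁M.trans hMt₂) (lt_add_one t₂)
      (fun t ht => hφ' t (ht₁.trans ht.1))
      (fun t ht => (mul_pos (rpow_pos_of_pos (ht₁.trans ht.1) _) (sub_pos.2 (hgt t ht))).le)
      (fun t ht => (mul_neg_of_pos_of_neg (rpow_pos_of_pos (by linarith [ht.1]) _)
        (sub_neg.2 (hlt₂ t ht.1))).le)
end

section
/- If (u,v) ∈ M⁺_{λ,μ} (Nehari constraint with ⟨ψ',(u,v)⟩ > 0), then J_{λ,μ}(u,v) < 0. Consequently α⁺_{λ,μ} = inf_{M⁺_{λ,μ}} J_{λ,μ} < 0 whenever M⁺_{λ,μ} ≠ ∅. -/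
open MeasureTheory Real

/-- `‖(u,v)‖^p = ∫_Ω |∇u|^p + ∫_Ω |∇v|^p`. -/
noncomputable def normP {N : ℕ} (Ω : Set (EuclideanSpace ℝ (Fin N))) (p : ℝ)
    (u v : EuclideanSpace ℝ (Fin N) → ℝ) : ℝ :=
  (∫ x in Ω, ‖gradient u x‖ ^ p) + ∫ x in Ω, ‖gradient v x‖ ^ p

/-- `λ∫_Ω f|u|^q + μ∫_Ω g|v|^q`. -/
noncomputable def qTerm {N : ℕ} (Ω : Set (EuclideanSpace ℝ (Fin N))) (q lam mu : ℝ)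
    (f g u v : EuclideanSpace ℝ (Fin N) → ℝ) : ℝ :=
  lam * (∫ x in Ω, f x * |u x| ^ q) + mu * ∫ x in Ω, g x * |v x| ^ q

/-- `∫_Ω h|u|^r|v|^s`. -/
noncomputable def hTerm {N : ℕ} (Ω : Set (EuclideanSpace ℝ (Fin N))) (r s : ℝ)
    (h u v : EuclideanSpace ℝ (Fin N) → ℝ) : ℝ :=
  ∫ x in Ω, h x * |u x| ^ r * |v x| ^ s

/-- The energy functional `J_{λ,μ}`. -/
noncomputable def Jfun {N : ℕ} (Ω : Set (EuclideanSpace ℝ (Fin N))) (p q r s lam mu : ℝ)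
    (f g h u v : EuclideanSpace ℝ (Fin N) → ℝ) : ℝ :=
  (1 / p) * normP Ω p u v - (1 / q) * qTerm Ω q lam mu f g u v
    - (1 / (r + s)) * hTerm Ω r s h u v

/-- The pairing `⟨ψ'_{λ,μ}(u,v),(u,v)⟩ = p‖(u,v)‖^p - q(λ∫f|u|^q + μ∫g|v|^q)
  - (r+s)∫h|u|^r|v|^s`. -/
noncomputable def psiPair {N : ℕ} (Ω : Set (EuclideanSpace ℝ (Fin N))) (p q r s lam mu : ℝ)
    (f g h u v : EuclideanSpace ℝ (Fin N) → ℝ) : ℝ :=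
  p * normP Ω p u v - q * qTerm Ω q lam mu f g u v - (r + s) * hTerm Ω r s h u v

/-!
On the Nehari manifold the `q`-term can be eliminated: writing `A = ‖(u,v)‖^p` and
`H = ∫_Ω h|u|^r|v|^s`, one gets `J = (q-p)/(pq) A + (r+s-q)/(q(r+s)) H` and
`⟨ψ'(u,v),(u,v)⟩ = (p-q) A - (r+s-q) H`. On `M⁺` the latter is positive, so
`H < (p-q)/(r+s-q) A`, and substituting gives `J < -(p-q)(r+s-p)/(pq(r+s)) A < 0`.
-/

section NehariIdentities

variable {N : ℕ} {Ω : Set (EuclideanSpace ℝ (Fin N))} {p q r s lam mu : ℝ}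
  {f g h u v : EuclideanSpace ℝ (Fin N) → ℝ}

theorem Jfun_eq_of_nehari (hp : p ≠ 0) (hq : q ≠ 0) (hrs : r + s ≠ 0)
    (hNehari : normP Ω p u v = qTerm Ω q lam mu f g u v + hTerm Ω r s h u v) :
    Jfun Ω p q r s lam mu f g h u v =
      (q - p) / (p * q) * normP Ω p u v
        + (r + s - q) / (q * (r + s)) * hTerm Ω r s h u v := by
  have hQ : qTerm Ω q lam mu f g u v = normP Ω p u v - hTerm Ω r s h u v := by linarith
  rw [Jfun, hQ]
  field_simp
  ring

theorem psiPair_eq_of_nehari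
    (hNehari : normP Ω p u v = qTerm Ω q lam mu f g u v + hTerm Ω r s h u v) :
    psiPair Ω p q r s lam mu f g h u v =
      (p - q) * normP Ω p u v - (r + s - q) * hTerm Ω r s h u v := by
  rw [psiPair, hNehari]
  ring

end NehariIdentities

theorem nehari_plus_energy_lt {p q t A H : ℝ} (hp : p ≠ 0) (hq : 0 < q) (hqt : q < t)
    (hplus : 0 < (p - q) * A - (t - q) * H) :
    (q - p) / (p * q) * A + (t - q) / (q * t) * H < -((p - q) * (t - p) / (p * q * t)) * A := by
  have ht : 0 < t := hq.trans hqt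
  calc (q - p) / (p * q) * A + (t - q) / (q * t) * H
      = (q - p) / (p * q) * A + (t - q) * H / (q * t) := by ring
    _ < (q - p) / (p * q) * A + (p - q) * A / (q * t) := by
        gcongr _ + ?_ / _
        linarith
    _ = -((p - q) * (t - p) / (p * q * t)) * A := by
        field_simp [ht.ne']
        ring

theorem stmt_10_general {N : ℕ} (Ω : Set (EuclideanSpace ℝ (Fin N)))
    (p q r s lam mu : ℝ) (f g h u v : EuclideanSpace ℝ (Fin N) → ℝ)
    (hq : 1 < q) (hqp : q < p) (hprs : p < r + s)
    (hpos : 0 < normP Ω p u v)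
    (hNehari : normP Ω p u v = qTerm Ω q lam mu f g u v + hTerm Ω r s h u v)
    (hplus : 0 < psiPair Ω p q r s lam mu f g h u v) :
    Jfun Ω p q r s lam mu f g h u v
      < -((p - q) * (r + s - p) / (p * q * (r + s))) * normP Ω p u v ∧
    Jfun Ω p q r s lam mu f g h u v < 0 := by
  have hq0 : 0 < q := by linarith
  have hp0 : 0 < p := by linarith
  have hrs0 : 0 < r + s := by linarith
  have hJ := Jfun_eq_of_nehari hp0.ne' hq0.ne' hrs0.ne' hNehari
  rw [psiPair_eq_of_nehari hNehari] at hplus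
  have hbound := hJ ▸ nehari_plus_energy_lt hp0.ne' hq0 (hqp.trans hprs) hplus
  refine ⟨hbound, hbound.trans ?_⟩
  have hcoeff : 0 < (p - q) * (r + s - p) / (p * q * (r + s)) :=
    div_pos (mul_pos (sub_pos.2 hqp) (sub_pos.2 hprs)) (by positivity)
  rw [neg_mul, neg_lt_zero]
  exact mul_pos hcoeff hpos

/-- if `(u,v) ∈ M⁺_{λ,μ}` (nonzero, Nehari constraint and
`⟨ψ'(u,v),(u,v)⟩ > 0`), then `J_{λ,μ}(u,v) < 0`; consequently the infimum
`α⁺_{λ,μ}` of `J_{λ,μ}` over `M⁺_{λ,μ}` is negative whenever `M⁺_{λ,μ} ≠ ∅`. -/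
theorem stmt_10 {N : ℕ} (Ω : Set (EuclideanSpace ℝ (Fin N)))
    (hΩ : Bornology.IsBounded Ω)
    (p q r s lam mu : ℝ) (f g h u v : EuclideanSpace ℝ (Fin N) → ℝ)
    (hf : ContinuousOn f (closure Ω)) (hg : ContinuousOn g (closure Ω))
    (hh : ContinuousOn h (closure Ω))
    (hq : 1 < q) (hqp : q < p) (hprs : p < r + s)
    (hnz : ¬(u = 0 ∧ v = 0)) (hpos : 0 < normP Ω p u v)
    (hNehari : normP Ω p u v = qTerm Ω q lam mu f g u v + hTerm Ω r s h u v)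
    (hplus : 0 < psiPair Ω p q r s lam mu f g h u v) :
    Jfun Ω p q r s lam mu f g h u v
      < -((p - q) * (r + s - p) / (p * q * (r + s))) * normP Ω p u v ∧
    Jfun Ω p q r s lam mu f g h u v < 0 :=
  stmt_10_general Ω p q r s lam mu f g h u v hq hqp hprs hpos hNehari hplus
end
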